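/- Let A be an h-skew-adjoint ℂ-linear endomorphism of ℂ^{n+1}, let λ ∈ ℝ, and set B = A − iλ·id. Then there exist no vectors e₁, e₂, e₃, e₄ ∈ ℂ^{n+1} with e₁ ≠ 0, B e₁ = 0, B e₂ = e₁, B e₃ = e₂ and B e₄ = e₃; i.e. A has no Jordan block of size greater than 3. -/

import Mathlib

open Complex

/-
The operator `B = A - iλ` is again `h`-skew-adjoint, so for the chain `e₄ ↦ e₃ ↦ e₂ ↦ e₁ ↦ 0`
one gets `h(e₁,e₁) = h(e₁,e₂) = h(e₂,e₂) = 0` by moving `B` across the form.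
Since `h` is positive definite on the hyperplane `x_{n+1} = 0`, a totally isotropic subspace
of a form of signature `(n,1)` has dimension at most one, so `e₁` and `e₂` are proportional.
Applying `B` to this proportionality forces `e₁` into that hyperplane, where isotropy gives `e₁ = 0`.
-/

noncomputable def hForm (n : ℕ) (x y : Fin (n+1) → ℂ) : ℂ :=
  (∑ i : Fin n, x i.castSucc * (starRingEnd ℂ) (y i.castSucc))
    - x (Fin.last n) * (starRingEnd ℂ) (y (Fin.last n))

def IsHSkewAdjoint (n : ℕ) (A : (Fin (n+1) → ℂ) →ₗ[ℂ] (Fin (n+1) → ℂ)) : Prop :=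
  ∀ x y : Fin (n+1) → ℂ, hForm n (A x) y + hForm n x (A y) = 0

section hForm

variable {n : ℕ}

lemma hForm_sub_left (x x' y : Fin (n+1) → ℂ) :
    hForm n (x - x') y = hForm n x y - hForm n x' y := by
  simp only [hForm, Pi.sub_apply, sub_mul, Finset.sum_sub_distrib]
  ring

lemma hForm_sub_right (x y y' : Fin (n+1) → ℂ) :
    hForm n x (y - y') = hForm n x y - hForm n x y' := by
  simp only [hForm, Pi.sub_apply, map_sub, mul_sub, Finset.sum_sub_distrib]
  ring

lemma hForm_smul_left (c : ℂ) (x y : Fin (n+1) → ℂ) :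
    hForm n (c • x) y = c * hForm n x y := by
  simp only [hForm, Pi.smul_apply, smul_eq_mul, Finset.mul_sum, mul_sub, mul_assoc]

lemma hForm_smul_right (c : ℂ) (x y : Fin (n+1) → ℂ) :
    hForm n x (c • y) = starRingEnd ℂ c * hForm n x y := by
  simp only [hForm, Pi.smul_apply, smul_eq_mul, map_mul, Finset.mul_sum, mul_sub]
  congr 1
  · exact Finset.sum_congr rfl fun _ _ => by ring
  · ring

lemma hForm_zero_left (y : Fin (n+1) → ℂ) : hForm n 0 y = 0 := by
  simp only [hForm, Pi.zero_apply, zero_mul, Finset.sum_const_zero, sub_zero]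

lemma conj_hForm (x y : Fin (n+1) → ℂ) : starRingEnd ℂ (hForm n x y) = hForm n y x := by
  simp only [hForm, map_sub, map_sum, map_mul, conj_conj, mul_comm]

lemma eq_zero_of_hForm_self_eq_zero {w : Fin (n+1) → ℂ} (hlast : w (Fin.last n) = 0)
    (hw : hForm n w w = 0) : w = 0 := by
  have hsum : ∑ i : Fin n, normSq (w i.castSucc) = 0 := by
    simp only [hForm, hlast, zero_mul, sub_zero, mul_conj] at hw
    exact_mod_cast hw
  rw [Finset.sum_eq_zero_iff_of_nonneg fun i _ => normSq_nonneg _] at hsum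
  funext j
  induction j using Fin.lastCases with
  | last => exact hlast
  | cast i => exact normSq_eq_zero.mp (hsum i (Finset.mem_univ i))

lemma smul_eq_smul_of_hForm_eq_zero {u v : Fin (n+1) → ℂ} (huu : hForm n u u = 0)
    (huv : hForm n u v = 0) (hvv : hForm n v v = 0) :
    v (Fin.last n) • u = u (Fin.last n) • v := by
  have hvu : hForm n v u = 0 := by rw [← conj_hForm, huv, map_zero]
  rw [← sub_eq_zero]
  refine eq_zero_of_hForm_self_eq_zero (by simp only [Pi.sub_apply, Pi.smul_apply, smul_eq_mul]; ring) ?_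
  simp only [hForm_sub_left, hForm_sub_right, hForm_smul_left, hForm_smul_right,
    huu, huv, hvu, hvv]
  ring

end hForm

namespace IsHSkewAdjoint

variable {n : ℕ} {B : (Fin (n+1) → ℂ) →ₗ[ℂ] (Fin (n+1) → ℂ)}

lemma sub_smul_id {A : (Fin (n+1) → ℂ) →ₗ[ℂ] (Fin (n+1) → ℂ)} (hA : IsHSkewAdjoint n A)
    (lam : ℝ) : IsHSkewAdjoint n (A - (I * (lam : ℂ)) • LinearMap.id) := by
  intro x y
  have hconj : starRingEnd ℂ (I * (lam : ℂ)) = -(I * (lam : ℂ)) := by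
    rw [map_mul, conj_I, conj_ofReal, neg_mul]
  simp only [LinearMap.sub_apply, LinearMap.smul_apply, LinearMap.id_apply, hForm_sub_left,
    hForm_sub_right, hForm_smul_left, hForm_smul_right, hconj]
  linear_combination hA x y

lemma hForm_apply_right (hB : IsHSkewAdjoint n B) (x y : Fin (n+1) → ℂ) :
    hForm n x (B y) = -hForm n (B x) y :=
  eq_neg_of_add_eq_zero_right (hB x y)

lemma hForm_apply_right_eq_zero (hB : IsHSkewAdjoint n B) {x : Fin (n+1) → ℂ} (hx : B x = 0)
    (y : Fin (n+1) → ℂ) : hForm n x (B y) = 0 := by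
  rw [hB.hForm_apply_right, hx, hForm_zero_left, neg_zero]

end IsHSkewAdjoint

theorem no_jordan_block_size_four_general (n : ℕ)
    (A : (Fin (n+1) → ℂ) →ₗ[ℂ] (Fin (n+1) → ℂ)) (hA : IsHSkewAdjoint n A)
    (lam : ℝ) (B : (Fin (n+1) → ℂ) →ₗ[ℂ] (Fin (n+1) → ℂ))
    (hB : B = A - (Complex.I * (lam : ℂ)) • LinearMap.id) :
    ¬ ∃ e₁ e₂ e₃ e₄ : Fin (n+1) → ℂ,
        e₁ ≠ 0 ∧ B e₁ = 0 ∧ B e₂ = e₁ ∧ B e₃ = e₂ ∧ B e₄ = e₃ := by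
  rintro ⟨e₁, e₂, e₃, e₄, hne, h1, h2, h3, h4⟩
  have hBskew : IsHSkewAdjoint n B := hB ▸ hA.sub_smul_id lam
  have h11 : hForm n e₁ e₁ = 0 := h2 ▸ hBskew.hForm_apply_right_eq_zero h1 e₂
  have h12 : hForm n e₁ e₂ = 0 := h3 ▸ hBskew.hForm_apply_right_eq_zero h1 e₃
  have h22 : hForm n e₂ e₂ = 0 := by
    calc hForm n e₂ e₂ = hForm n e₂ (B e₃) := by rw [h3]
      _ = -hForm n e₁ (B e₄) := by rw [hBskew.hForm_apply_right, h2, h4]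
      _ = 0 := by rw [hBskew.hForm_apply_right_eq_zero h1, neg_zero]
  have hlast : e₁ (Fin.last n) = 0 := by
    have hprop := congrArg B (smul_eq_smul_of_hForm_eq_zero h11 h12 h22)
    rw [map_smul, map_smul, h1, h2, smul_zero, eq_comm, smul_eq_zero] at hprop
    exact hprop.resolve_right hne
  exact hne (eq_zero_of_hForm_self_eq_zero hlast h11)

/-- an `h`-skew-adjoint endomorphism has no Jordan block of size
greater than `3` for a purely imaginary eigenvalue `iλ`: with
`B = A − iλ·id`, there is no chain `B e₁ = 0, B e₂ = e₁, B e₃ = e₂,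
B e₄ = e₃` with `e₁ ≠ 0`. -/
theorem no_jordan_block_size_four (n : ℕ) (hn : 1 ≤ n)
    (A : (Fin (n+1) → ℂ) →ₗ[ℂ] (Fin (n+1) → ℂ)) (hA : IsHSkewAdjoint n A)
    (lam : ℝ) (B : (Fin (n+1) → ℂ) →ₗ[ℂ] (Fin (n+1) → ℂ))
    (hB : B = A - (Complex.I * (lam : ℂ)) • LinearMap.id) :
    ¬ ∃ e₁ e₂ e₃ e₄ : Fin (n+1) → ℂ,
        e₁ ≠ 0 ∧ B e₁ = 0 ∧ B e₂ = e₁ ∧ B e₃ = e₂ ∧ B e₄ = e₃ :=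
  no_jordan_block_size_four_general n A hA lam B hB
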